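/- arXiv:0901.3120 — 10 statements merged into one kernel-verified Lean document; each statement's English description precedes it below -/
import Mathlib

section
/- Let (g,J) be a real Lie algebra with integrable complex structure J such that the condition [x,y] = [Jx,Jy] holds for all x,y (J is abelian). Then each term Z^i(g) of the ascending central series is J-invariant. -/
/-- If `J` is an abelian integrable complex structure on a real Lie algebra `g`
(`[x,y] = [Jx,Jy]`), then every term of the ascending central series is `J`-invariant. -/
theorem stmt_5 (g : Type*) [LieRing g] [LieAlgebra ℝ g]
    (J : g →ₗ[ℝ] g) (hJ : J ∘ₗ J = -LinearMap.id)
    (hint : ∀ x y : g, ⁅x, y⁆ - ⁅J x, J y⁆ + J ⁅J x, y⁆ + J ⁅x, J y⁆ = 0)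
    (habel : ∀ x y : g, ⁅x, y⁆ = ⁅J x, J y⁆) :
    ∀ i : ℕ, ∀ x ∈ (⊥ : LieSubmodule ℝ g g).ucs i, J x ∈ (⊥ : LieSubmodule ℝ g g).ucs i := by
  intro i
  induction i with
  | zero =>
    intro x hx
    simp only [LieSubmodule.ucs_zero, LieSubmodule.mem_bot] at hx ⊢
    simp [hx]
  | succ n ih =>
    intro x hx
    rw [LieSubmodule.ucs_succ, LieSubmodule.mem_normalizer] at hx ⊢
    intro y
    have hJJ : J (J x) = -x := by
      have := congrFun (congrArg (fun f => f.toFun) hJ) x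
      simpa using this
    rw [habel y (J x), hJJ]
    simpa using (⊥ : LieSubmodule ℝ g g).ucs n |>.neg_mem (hx (J y))
end

section
/- Let (g,J) be a real nilpotent Lie algebra with integrable complex structure. If the commutator subalgebra [g,g] contains no nonzero J-invariant subspace, then the complex structure J is abelian, i.e. [x,y] = [Jx,Jy] for all x,y ∈ g. -/
/-! The span of the defects `⁅x, y⁆ - ⁅J x, J y⁆` lies in `[g, g]`, and integrability says
exactly that `J` maps the defect of `(x, y)` to the defect of `(J x, y)`. So this span is a
`J`-invariant subspace of `[g, g]`, hence zero by hypothesis. -/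

namespace LieAlgebra

variable {R L : Type*} [CommRing R] [LieRing L] [LieAlgebra R L]

theorem lie_mem_derivedSeries_one (x y : L) :
    ⁅x, y⁆ ∈ (derivedSeries R L 1 : Submodule R L) := by
  rw [coe_derivedSeries_one_eq]
  exact Submodule.subset_span ⟨x, y, rfl⟩

def abelianDefect (J : L →ₗ[R] L) : Submodule R L :=
  Submodule.span R (Set.range fun p : L × L => ⁅p.1, p.2⁆ - ⁅J p.1, J p.2⁆)

variable (J : L →ₗ[R] L)

theorem lie_sub_lie_mem_abelianDefect (x y : L) : ⁅x, y⁆ - ⁅J x, J y⁆ ∈ abelianDefect J :=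
  Submodule.subset_span ⟨(x, y), rfl⟩

theorem abelianDefect_le_derivedSeries_one :
    abelianDefect J ≤ (derivedSeries R L 1 : Submodule R L) := by
  rw [abelianDefect, Submodule.span_le]
  rintro _ ⟨⟨x, y⟩, rfl⟩
  exact Submodule.sub_mem _ (lie_mem_derivedSeries_one x y) (lie_mem_derivedSeries_one _ _)

variable {J}

theorem map_lie_sub_lie_of_integrable (hJ : ∀ x, J (J x) = -x)
    (hint : ∀ x y : L, ⁅x, y⁆ - ⁅J x, J y⁆ + J ⁅J x, y⁆ + J ⁅x, J y⁆ = 0) (x y : L) :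
    J (⁅x, y⁆ - ⁅J x, J y⁆) = ⁅J x, y⁆ - ⁅J (J x), J y⁆ := by
  have hdefect : ⁅x, y⁆ - ⁅J x, J y⁆ = -(J ⁅J x, y⁆ + J ⁅x, J y⁆) := by
    rw [eq_neg_iff_add_eq_zero, ← hint x y]
    abel
  rw [hdefect, map_neg, map_add, hJ, hJ, hJ, neg_lie]
  abel

theorem map_mem_abelianDefect_of_integrable (hJ : ∀ x, J (J x) = -x)
    (hint : ∀ x y : L, ⁅x, y⁆ - ⁅J x, J y⁆ + J ⁅J x, y⁆ + J ⁅x, J y⁆ = 0)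
    {w : L} (hw : w ∈ abelianDefect J) : J w ∈ abelianDefect J := by
  suffices abelianDefect J ≤ (abelianDefect J).comap J from this hw
  rw [abelianDefect, Submodule.span_le]
  rintro _ ⟨⟨x, y⟩, rfl⟩
  change J _ ∈ abelianDefect J
  rw [map_lie_sub_lie_of_integrable hJ hint]
  exact lie_sub_lie_mem_abelianDefect J _ _

end LieAlgebra

theorem stmt_6_general (g : Type*) [LieRing g] [LieAlgebra ℝ g]
    (J : g →ₗ[ℝ] g) (hJ : J ∘ₗ J = -LinearMap.id)
    (hint : ∀ x y : g, ⁅x, y⁆ - ⁅J x, J y⁆ + J ⁅J x, y⁆ + J ⁅x, J y⁆ = 0)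
    (h : ∀ W : Submodule ℝ g, W ≤ (LieAlgebra.derivedSeries ℝ g 1 : Submodule ℝ g) →
        (∀ w ∈ W, J w ∈ W) → W = ⊥) :
    ∀ x y : g, ⁅x, y⁆ = ⁅J x, J y⁆ := by
  have hJJ (x : g) : J (J x) = -x := by simpa using LinearMap.congr_fun hJ x
  have hbot : LieAlgebra.abelianDefect J = ⊥ :=
    h _ (LieAlgebra.abelianDefect_le_derivedSeries_one J)
      fun _ => LieAlgebra.map_mem_abelianDefect_of_integrable hJJ hint
  intro x y
  have hxy := LieAlgebra.lie_sub_lie_mem_abelianDefect J x y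
  rwa [hbot, Submodule.mem_bot, sub_eq_zero] at hxy

/-- If the commutator subalgebra of a nilpotent Lie algebra with integrable complex
structure `J` contains no nonzero `J`-invariant subspace, then `J` is abelian. -/
theorem stmt_6 (g : Type*) [LieRing g] [LieAlgebra ℝ g] [LieRing.IsNilpotent g]
    [Module.Finite ℝ g]
    (J : g →ₗ[ℝ] g) (hJ : J ∘ₗ J = -LinearMap.id)
    (hint : ∀ x y : g, ⁅x, y⁆ - ⁅J x, J y⁆ + J ⁅J x, y⁆ + J ⁅x, J y⁆ = 0)
    (h : ∀ W : Submodule ℝ g, W ≤ (LieAlgebra.derivedSeries ℝ g 1 : Submodule ℝ g) →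
        (∀ w ∈ W, J w ∈ W) → W = ⊥) :
    ∀ x y : g, ⁅x, y⁆ = ⁅J x, J y⁆ :=
  stmt_6_general g J hJ hint h
end

section
/- Let (g,J) be a nilpotent Lie algebra with integrable complex structure J, let Z(g) be its centre, and set V := span{[Jz, x] : z ∈ Z(g), x ∈ g}. Then V is a J-invariant subspace of [g,g]. -/
theorem apply_lie_apply_eq_lie_apply_of_mem_center {R L : Type*} [CommRing R] [LieRing L]
    [LieAlgebra R L] (J : L →ₗ[R] L)
    (hint : ∀ x y : L, ⁅x, y⁆ - ⁅J x, J y⁆ + J ⁅J x, y⁆ + J ⁅x, J y⁆ = 0)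
    {z : L} (hz : z ∈ LieAlgebra.center R L) (x : L) :
    J ⁅J z, x⁆ = ⁅J z, J x⁆ := by
  have hzx : ⁅z, x⁆ = 0 := by rw [← lie_skew, hz x, neg_zero]
  have hzJx : ⁅z, J x⁆ = 0 := by rw [← lie_skew, hz (J x), neg_zero]
  have h := hint z x
  rw [hzx, hzJx, map_zero, add_zero, zero_sub, neg_add_eq_zero] at h
  exact h.symm

theorem stmt_7_general (g : Type*) [LieRing g] [LieAlgebra ℝ g]
    (J : g →ₗ[ℝ] g)
    (hint : ∀ x y : g, ⁅x, y⁆ - ⁅J x, J y⁆ + J ⁅J x, y⁆ + J ⁅x, J y⁆ = 0) :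
    Submodule.span ℝ {v : g | ∃ z ∈ LieAlgebra.center ℝ g, ∃ x : g, v = ⁅J z, x⁆} ≤
        (LieAlgebra.derivedSeries ℝ g 1 : Submodule ℝ g) ∧
      ∀ v ∈ Submodule.span ℝ {v : g | ∃ z ∈ LieAlgebra.center ℝ g, ∃ x : g, v = ⁅J z, x⁆},
        J v ∈ Submodule.span ℝ {v : g | ∃ z ∈ LieAlgebra.center ℝ g, ∃ x : g, v = ⁅J z, x⁆} := by
  set S : Set g := {v : g | ∃ z ∈ LieAlgebra.center ℝ g, ∃ x : g, v = ⁅J z, x⁆}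
  refine ⟨?_, fun v hv => ?_⟩
  · rw [LieAlgebra.coe_derivedSeries_one_eq]
    exact Submodule.span_mono fun _ ⟨z, _, x, hv⟩ => ⟨J z, x, hv.symm⟩
  · have hJS : S ⊆ (Submodule.span ℝ S).comap J := by
      rintro _ ⟨z, hz, x, rfl⟩
      rw [SetLike.mem_coe, Submodule.mem_comap,
        apply_lie_apply_eq_lie_apply_of_mem_center J hint hz x]
      exact Submodule.subset_span ⟨z, hz, J x, rfl⟩
    exact Submodule.span_le.mpr hJS hv

/-- For a nilpotent Lie algebra with integrable complex structure `J`, the subspace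
`V = span {[Jz,x] : z central, x ∈ g}` is a `J`-invariant subspace of `[g,g]`. -/
theorem stmt_7 (g : Type*) [LieRing g] [LieAlgebra ℝ g] [LieRing.IsNilpotent g]
    (J : g →ₗ[ℝ] g) (hJ : J ∘ₗ J = -LinearMap.id)
    (hint : ∀ x y : g, ⁅x, y⁆ - ⁅J x, J y⁆ + J ⁅J x, y⁆ + J ⁅x, J y⁆ = 0) :
    Submodule.span ℝ {v : g | ∃ z ∈ LieAlgebra.center ℝ g, ∃ x : g, v = ⁅J z, x⁆} ≤
        (LieAlgebra.derivedSeries ℝ g 1 : Submodule ℝ g) ∧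
      ∀ v ∈ Submodule.span ℝ {v : g | ∃ z ∈ LieAlgebra.center ℝ g, ∃ x : g, v = ⁅J z, x⁆},
        J v ∈ Submodule.span ℝ {v : g | ∃ z ∈ LieAlgebra.center ℝ g, ∃ x : g, v = ⁅J z, x⁆} :=
  stmt_7_general g J hint
end

section
/- Every integrable complex structure on a 2-step nilpotent real Lie algebra is nilpotent: the minimal torus bundle series T⁰g = 0, T^{i+1}g = {x ∈ g : [x,g] ⊆ T^i g and [Jx,g] ⊆ T^i g} exhausts g, i.e. T^k g = g for some k. -/
/-- The minimal torus bundle series `T⁰g = 0`,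
`T^{i+1}g = {x : [x,g] ⊆ T^i g ∧ [Jx,g] ⊆ T^i g}`. -/
def torusSeries (g : Type*) [LieRing g] [LieAlgebra ℝ g] (J : g →ₗ[ℝ] g) :
    ℕ → Submodule ℝ g
  | 0 => ⊥
  | (i + 1) =>
    { carrier := {x : g | ∀ y : g, ⁅x, y⁆ ∈ torusSeries g J i ∧ ⁅J x, y⁆ ∈ torusSeries g J i}
      add_mem' := by
        intro a b ha hb y
        constructor
        · simpa [add_lie] using (torusSeries g J i).add_mem (ha y).1 (hb y).1
        · simpa [map_add, add_lie] using (torusSeries g J i).add_mem (ha y).2 (hb y).2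
      zero_mem' := by
        intro y
        simp [Submodule.zero_mem]
      smul_mem' := by
        intro c a ha y
        constructor
        · simpa [smul_lie] using (torusSeries g J i).smul_mem c (ha y).1
        · simpa [map_smul, smul_lie] using (torusSeries g J i).smul_mem c (ha y).2 }

lemma mem_torusSeries_succ {g : Type*} [LieRing g] [LieAlgebra ℝ g] (J : g →ₗ[ℝ] g)
    (i : ℕ) (x : g) :
    x ∈ torusSeries g J (i + 1) ↔
      ∀ y : g, ⁅x, y⁆ ∈ torusSeries g J i ∧ ⁅J x, y⁆ ∈ torusSeries g J i :=
  Iff.rfl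

/-- Every integrable complex structure on a 2-step nilpotent real Lie algebra is nilpotent:
the minimal torus bundle series exhausts `g`. -/
theorem stmt_9 (g : Type*) [LieRing g] [LieAlgebra ℝ g] [Module.Finite ℝ g]
    (h2step : ∀ x y z : g, ⁅⁅x, y⁆, z⁆ = 0)
    (J : g →ₗ[ℝ] g) (hJ : J ∘ₗ J = -LinearMap.id)
    (hint : ∀ x y : g, ⁅x, y⁆ - ⁅J x, J y⁆ + J ⁅J x, y⁆ + J ⁅x, J y⁆ = 0) :
    ∃ k : ℕ, torusSeries g J k = ⊤ := by
  have hJ2 : ∀ x : g, J (J x) = -x := by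
    intro x
    have := LinearMap.congr_fun hJ x
    simpa using this
  -- For central a, J⁅Ja, y⁆ = ⁅Ja, Jy⁆
  have key : ∀ a : g, (∀ z : g, ⁅a, z⁆ = 0) → ∀ y : g, J ⁅J a, y⁆ = ⁅J a, J y⁆ := by
    intro a ha y
    have h := hint (J a) (-(J y))
    rw [hJ2 a] at h
    simp only [map_neg, hJ2 y, lie_neg, neg_lie, neg_neg, ha, map_zero, neg_zero] at h
    -- h : ⁅J a, -(J y)⁆ + J ⁅J a, y⁆ = 0  (after simplification)
    rw [sub_zero, add_zero] at h
    exact (neg_add_eq_zero.mp h).symm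
  -- brackets lie in T²
  have hc : ∀ u v : g, ⁅u, v⁆ ∈ torusSeries g J 2 := by
    intro u v
    rw [mem_torusSeries_succ]
    intro y
    constructor
    · rw [h2step]
      exact Submodule.zero_mem _
    · rw [mem_torusSeries_succ]
      intro z
      constructor
      · simp [torusSeries, h2step]
      · have := key ⁅u, v⁆ (fun z => h2step u v z) y
        rw [this]
        simp [torusSeries, h2step]
  refine ⟨3, ?_⟩
  rw [eq_top_iff]
  intro x _
  rw [mem_torusSeries_succ]
  intro y
  exact ⟨hc x y, hc (J x) y⟩
end

section
/- Let (g,J) be a nilpotent Lie algebra with integrable complex structure, z a central element, and W = span_ℝ{z, Jz}. Then the image of the adjoint map ad_{Jz} : g → g intersects W trivially: (im ad_{Jz}) ∩ W = 0. -/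
/-!
For central `z`, integrability of `J` makes `D = ad_{Jz}` commute with `J`, so `im D` is
`J`-invariant. If `im D` met `W = span {z, Jz}` in some `w = a z + b Jz ≠ 0`, it would also
contain `J w = a Jz - b z`, hence `b w + a J w = (a² + b²) Jz`, so `Jz ∈ im D`. But
if `Jz = ⁅Jz, y⁆` then `Jz` is an eigenvector of `ad y` with eigenvalue `-1`, impossible for the
nilpotent endomorphism `ad y` unless `Jz = 0`, and then `z = -J (Jz) = 0`.
-/

namespace LieModule

variable {L M : Type*} [LieRing L] [AddCommGroup M] [LieRingModule L M] [IsNilpotent L M]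

theorem eq_zero_of_lie_eq_neg {x : L} {m : M} (h : ⁅x, m⁆ = -m) : m = 0 := by
  -- nilpotency only involves the Lie ring, so the scalars can be taken to be `ℤ`
  have hunit : IsUnit (toEnd ℤ L M x + 1) :=
    (isNilpotent_toEnd_of_isNilpotent ℤ L M x).isUnit_add_one
  refine ((Module.End.isUnit_iff _).mp hunit).injective ?_
  simp [h]

end LieModule

namespace LieAlgebra

variable {R L : Type*} [CommRing R] [LieRing L] [LieAlgebra R L] [LieRing.IsNilpotent L]

theorem eq_zero_of_mem_range_ad_self {v : L} (hv : v ∈ LinearMap.range (ad R L v)) : v = 0 := by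
  obtain ⟨y, hy⟩ := hv
  refine LieModule.eq_zero_of_lie_eq_neg (x := y) ?_
  rw [← lie_skew, ← ad_apply (R := R), hy]

end LieAlgebra

theorem lie_map_eq_map_lie_of_mem_center {K g : Type*} [CommRing K] [LieRing g]
    [LieAlgebra K g] {J : g →ₗ[K] g}
    (hint : ∀ x y : g, ⁅x, y⁆ - ⁅J x, J y⁆ + J ⁅J x, y⁆ + J ⁅x, J y⁆ = 0)
    {z : g} (hz : z ∈ LieAlgebra.center K g) (x : g) : ⁅J z, J x⁆ = J ⁅J z, x⁆ := by
  have h := hint x z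
  rw [hz x, hz (J x), map_zero] at h
  rw [← lie_skew, ← lie_skew (J z) x, map_neg]
  linear_combination (norm := abel) h

theorem map_mem_of_mem_inf_span_pair {K V : Type*} [Field K] [LinearOrder K]
    [IsStrictOrderedRing K] [AddCommGroup V] [Module K V] {J : V →ₗ[K] V}
    (hJ : J ∘ₗ J = -LinearMap.id)
    {S : Submodule K V} (hS : ∀ w ∈ S, J w ∈ S) {v w : V}
    (hw : w ∈ S ⊓ Submodule.span K {v, J v}) (hw0 : w ≠ 0) : J v ∈ S := by
  obtain ⟨hwS, a, b, rfl⟩ := And.imp_right Submodule.mem_span_pair.mp hw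
  have hJJ : J (J v) = -v := congr($hJ v)
  have hab : a ^ 2 + b ^ 2 ≠ 0 := by
    contrapose! hw0
    obtain ⟨rfl, rfl⟩ : a = 0 ∧ b = 0 := by
      constructor <;> nlinarith [sq_nonneg a, sq_nonneg b]
    simp
  have hcomb :
      b • (a • v + b • J v) + a • J (a • v + b • J v) = (a ^ 2 + b ^ 2) • J v := by
    rw [map_add, map_smul, map_smul, hJJ]
    module
  have hmem : (a ^ 2 + b ^ 2) • J v ∈ S :=
    hcomb ▸ S.add_mem (S.smul_mem b hwS) (S.smul_mem a (hS _ hwS))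
  exact (S.smul_mem_iff hab).mp hmem

/-- In a nilpotent Lie algebra with integrable complex structure, for `z` central and
`W = span {z, Jz}`, the image of `ad_{Jz}` intersects `W` trivially. -/
theorem stmt_10 (g : Type*) [LieRing g] [LieAlgebra ℝ g] [LieRing.IsNilpotent g]
    (J : g →ₗ[ℝ] g) (hJ : J ∘ₗ J = -LinearMap.id)
    (hint : ∀ x y : g, ⁅x, y⁆ - ⁅J x, J y⁆ + J ⁅J x, y⁆ + J ⁅x, J y⁆ = 0)
    (z : g) (hz : z ∈ LieAlgebra.center ℝ g) :
    LinearMap.range (LieAlgebra.ad ℝ g (J z)) ⊓ Submodule.span ℝ {z, J z} = ⊥ := by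
  have hJ_range : ∀ w ∈ LinearMap.range (LieAlgebra.ad ℝ g (J z)),
      J w ∈ LinearMap.range (LieAlgebra.ad ℝ g (J z)) := by
    rintro _ ⟨x, rfl⟩
    exact ⟨J x, lie_map_eq_map_lie_of_mem_center hint hz x⟩
  rw [Submodule.eq_bot_iff]
  intro w hw
  by_contra hw0
  have hJz : J z = 0 :=
    LieAlgebra.eq_zero_of_mem_range_ad_self (map_mem_of_mem_inf_span_pair hJ hJ_range hw hw0)
  have hz0 : z = 0 := by simpa [hJz] using (congr($hJ z) : J (J z) = -z).symm
  exact hw0 (by simpa [hz0] using hw)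
end

section
/- Let g be a nilpotent Lie algebra whose commutator subalgebra [g,g] has real dimension 2, and let J be an integrable complex structure on g. Then at least one of the subspaces Z(g) (the centre) and [g,g] is J-invariant. -/
/-!
For central `z`, integrability reduces to `J ⁅x, J z⁆ = ⁅J x, J z⁆`, so the span `V` of the
brackets `⁅x, J z⁆` is a `J`-invariant subspace of `[g, g]`. A complex structure has no real
eigenvalues, so `V` cannot be a line; as `dim [g, g] = 2`, either `V = 0`, which makes the centre
`J`-invariant, or `V = [g, g]`, which makes `[g, g]` `J`-invariant.
-/

open Module

section ComplexStructure

variable {K V : Type*} [Field K] [LinearOrder K] [IsStrictOrderedRing K]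
  [AddCommGroup V] [Module K V] {J : V →ₗ[K] V}

theorem Submodule.finrank_ne_one_of_apply_mem (hJ : J ∘ₗ J = -LinearMap.id) {W : Submodule K V}
    (hW : ∀ v ∈ W, J v ∈ W) : finrank K W ≠ 1 := by
  intro hone
  obtain ⟨v, hv0, hspan⟩ := finrank_eq_one_iff'.mp hone
  obtain ⟨c, hc⟩ := hspan ⟨J v, hW v v.2⟩
  have hJv : J v = c • (v : V) := congrArg Subtype.val hc.symm
  have hsq : (c * c + 1) • (v : V) = 0 := by
    have hJJv : J (J v) = -v := by simpa using LinearMap.congr_fun hJ v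
    rw [hJv, map_smul, hJv, smul_smul] at hJJv
    rw [add_smul, one_smul, hJJv, neg_add_cancel]
  rcases smul_eq_zero.mp hsq with hc | hv
  · nlinarith [mul_self_nonneg c]
  · exact hv0 (Subtype.coe_injective hv)

theorem Submodule.eq_bot_or_eq_of_le_of_finrank_eq_two (hJ : J ∘ₗ J = -LinearMap.id)
    {W D : Submodule K V} (hWD : W ≤ D) (hD : finrank K D = 2) (hW : ∀ v ∈ W, J v ∈ W) :
    W = ⊥ ∨ W = D := by
  have : FiniteDimensional K D := Module.finite_of_finrank_eq_succ hD
  have : FiniteDimensional K W := Submodule.finiteDimensional_of_le hWD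
  have hle : finrank K W ≤ 2 := hD ▸ Submodule.finrank_mono hWD
  have hne : finrank K W ≠ 1 := finrank_ne_one_of_apply_mem hJ hW
  interval_cases h : finrank K W
  · exact Or.inl (Submodule.finrank_eq_zero.mp h)
  · exact absurd rfl hne
  · exact Or.inr (Submodule.eq_of_le_of_finrank_eq hWD (h.trans hD.symm))

end ComplexStructure

namespace LieAlgebra

variable {R L : Type*} [CommRing R] [LieRing L] [LieAlgebra R L] (J : L →ₗ[R] L)

def centralBracketSpan : Submodule R L :=
  Submodule.span R {v | ∃ z ∈ center R L, ∃ x : L, ⁅x, J z⁆ = v}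

variable {J}

theorem apply_lie_apply_of_mem_center
    (hint : ∀ x y : L, ⁅x, y⁆ - ⁅J x, J y⁆ + J ⁅J x, y⁆ + J ⁅x, J y⁆ = 0)
    {z : L} (hz : z ∈ center R L) (x : L) : J ⁅x, J z⁆ = ⁅J x, J z⁆ := by
  have hcomm : ∀ w : L, ⁅w, z⁆ = 0 := (LieModule.mem_maxTrivSubmodule R L L z).mp hz
  have h := hint x z
  rw [hcomm, hcomm, map_zero, zero_sub, add_zero, add_comm, ← sub_eq_add_neg, sub_eq_zero] at h
  exact h

theorem centralBracketSpan_le_derivedSeries :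
    centralBracketSpan J ≤ (derivedSeries R L 1 : Submodule R L) := by
  rw [centralBracketSpan, Submodule.span_le]
  rintro _ ⟨z, -, x, rfl⟩
  change ⁅x, J z⁆ ∈ derivedSeries R L 1
  rw [derivedSeries_def, derivedSeriesOfIdeal_succ]
  exact LieSubmodule.lie_mem_lie (LieSubmodule.mem_top x) (LieSubmodule.mem_top (J z))

theorem apply_mem_centralBracketSpan
    (hint : ∀ x y : L, ⁅x, y⁆ - ⁅J x, J y⁆ + J ⁅J x, y⁆ + J ⁅x, J y⁆ = 0)
    {v : L} (hv : v ∈ centralBracketSpan J) : J v ∈ centralBracketSpan J := by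
  suffices (centralBracketSpan J).map J ≤ centralBracketSpan J from this ⟨v, hv, rfl⟩
  rw [centralBracketSpan, Submodule.map_span_le]
  rintro _ ⟨z, hz, x, rfl⟩
  exact Submodule.subset_span ⟨z, hz, J x, (apply_lie_apply_of_mem_center hint hz x).symm⟩

theorem apply_mem_center_of_centralBracketSpan_eq_bot (h : centralBracketSpan J = ⊥)
    {z : L} (hz : z ∈ center R L) : J z ∈ center R L := by
  refine (LieModule.mem_maxTrivSubmodule R L L (J z)).mpr fun x ↦ ?_
  have hmem : ⁅x, J z⁆ ∈ centralBracketSpan J := Submodule.subset_span ⟨z, hz, x, rfl⟩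
  rwa [h, Submodule.mem_bot] at hmem

end LieAlgebra

open LieAlgebra in
theorem stmt_11_general (g : Type*) [LieRing g] [LieAlgebra ℝ g]
    (hdim : Module.finrank ℝ (LieAlgebra.derivedSeries ℝ g 1 : Submodule ℝ g) = 2)
    (J : g →ₗ[ℝ] g) (hJ : J ∘ₗ J = -LinearMap.id)
    (hint : ∀ x y : g, ⁅x, y⁆ - ⁅J x, J y⁆ + J ⁅J x, y⁆ + J ⁅x, J y⁆ = 0) :
    (∀ z ∈ LieAlgebra.center ℝ g, J z ∈ LieAlgebra.center ℝ g) ∨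
      (∀ c ∈ LieAlgebra.derivedSeries ℝ g 1, J c ∈ LieAlgebra.derivedSeries ℝ g 1) := by
  rcases Submodule.eq_bot_or_eq_of_le_of_finrank_eq_two hJ centralBracketSpan_le_derivedSeries
      hdim (fun _ ↦ apply_mem_centralBracketSpan hint) with hbot | hder
  · exact Or.inl fun z ↦ apply_mem_center_of_centralBracketSpan_eq_bot hbot
  · refine Or.inr fun c hc ↦ ?_
    have hJc : J c ∈ (derivedSeries ℝ g 1 : Submodule ℝ g) :=
      hder ▸ apply_mem_centralBracketSpan hint (hder ▸ hc)
    exact hJc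

/-- If the commutator subalgebra of a nilpotent Lie algebra `g` is 2-dimensional, then for
any integrable complex structure `J` at least one of the centre and the commutator
subalgebra is `J`-invariant. -/
theorem stmt_11 (g : Type*) [LieRing g] [LieAlgebra ℝ g] [LieRing.IsNilpotent g]
    [Module.Finite ℝ g]
    (hdim : Module.finrank ℝ (LieAlgebra.derivedSeries ℝ g 1 : Submodule ℝ g) = 2)
    (J : g →ₗ[ℝ] g) (hJ : J ∘ₗ J = -LinearMap.id)
    (hint : ∀ x y : g, ⁅x, y⁆ - ⁅J x, J y⁆ + J ⁅J x, y⁆ + J ⁅x, J y⁆ = 0) :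
    (∀ z ∈ LieAlgebra.center ℝ g, J z ∈ LieAlgebra.center ℝ g) ∨
      (∀ c ∈ LieAlgebra.derivedSeries ℝ g 1, J c ∈ LieAlgebra.derivedSeries ℝ g 1) :=
  stmt_11_general g hdim J hJ hint
end

section
/- Let g be a nilpotent real Lie algebra with 1-dimensional commutator subalgebra [g,g]. Then every integrable complex structure J on g is abelian, i.e. [Jx,Jy] = [x,y] for all x,y ∈ g. -/
/-!
The Nijenhuis identity says that `J e = ⁅J x, J y⁆ - ⁅x, y⁆` for `e = ⁅J x, y⁆ + ⁅x, J y⁆`.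
Both `e` and `J e` lie in the line `[g, g]`, so `J` would preserve the line spanned by `e`
if `e ≠ 0`; but `J² = -1` has no real eigenvalue. Hence `e = 0`, and then `J e = 0` as well.
-/

open Module

lemma LieAlgebra.lie_mem_derivedSeries_one_s12 {R L : Type*} [CommRing R] [LieRing L]
    [LieAlgebra R L] (x y : L) : ⁅x, y⁆ ∈ derivedSeries R L 1 :=
  LieSubmodule.lie_mem_lie (LieSubmodule.mem_top x) (LieSubmodule.mem_top y)

section ComplexStructure

variable {K V : Type*} [Field K] [LinearOrder K] [IsStrictOrderedRing K]
  [AddCommGroup V] [Module K V] {J : V →ₗ[K] V}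

lemma eq_zero_of_apply_eq_smul_of_comp_self_eq_neg_id (hJ : J ∘ₗ J = -LinearMap.id)
    {v : V} {c : K} (hv : J v = c • v) : v = 0 := by
  have hJJv := LinearMap.congr_fun hJ v
  simp only [LinearMap.comp_apply, LinearMap.neg_apply, LinearMap.id_apply, hv, map_smul,
    smul_smul] at hJJv
  have hsum : (c * c + 1) • v = 0 := by rw [add_smul, one_smul, hJJv, neg_add_cancel]
  exact (smul_eq_zero.mp hsum).resolve_left
    (add_pos_of_nonneg_of_pos (mul_self_nonneg c) one_pos).ne'

lemma eq_zero_of_mem_of_apply_mem_of_finrank_eq_one (hJ : J ∘ₗ J = -LinearMap.id)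
    {S : Submodule K V} (hS : finrank K S = 1) {v : V} (hv : v ∈ S) (hJv : J v ∈ S) :
    v = 0 := by
  by_contra hne
  have hne' : (⟨v, hv⟩ : S) ≠ 0 := fun h => hne (congrArg Subtype.val h)
  obtain ⟨c, hc⟩ := (finrank_eq_one_iff_of_nonzero' _ hne').mp hS ⟨J v, hJv⟩
  exact hne (eq_zero_of_apply_eq_smul_of_comp_self_eq_neg_id hJ (congrArg Subtype.val hc).symm)

end ComplexStructure

theorem stmt_12_general (g : Type*) [LieRing g] [LieAlgebra ℝ g]
    (hdim : Module.finrank ℝ (LieAlgebra.derivedSeries ℝ g 1 : Submodule ℝ g) = 1)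
    (J : g →ₗ[ℝ] g) (hJ : J ∘ₗ J = -LinearMap.id)
    (hint : ∀ x y : g, ⁅x, y⁆ - ⁅J x, J y⁆ + J ⁅J x, y⁆ + J ⁅x, J y⁆ = 0) :
    ∀ x y : g, ⁅J x, J y⁆ = ⁅x, y⁆ := by
  intro x y
  have hmem (a b : g) : ⁅a, b⁆ ∈ (LieAlgebra.derivedSeries ℝ g 1 : Submodule ℝ g) :=
    LieAlgebra.lie_mem_derivedSeries_one_s12 a b
  have hJe : J (⁅J x, y⁆ + ⁅x, J y⁆) = ⁅J x, J y⁆ - ⁅x, y⁆ := by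
    rw [map_add, ← sub_eq_zero, ← hint x y]
    abel
  have he : ⁅J x, y⁆ + ⁅x, J y⁆ = 0 :=
    eq_zero_of_mem_of_apply_mem_of_finrank_eq_one hJ hdim (add_mem (hmem _ _) (hmem _ _))
      (hJe ▸ sub_mem (hmem _ _) (hmem _ _))
  rw [he, map_zero, eq_comm, sub_eq_zero] at hJe
  exact hJe

/-- Every integrable complex structure on a nilpotent Lie algebra with 1-dimensional
commutator subalgebra is abelian. -/
theorem stmt_12 (g : Type*) [LieRing g] [LieAlgebra ℝ g] [LieRing.IsNilpotent g]
    [Module.Finite ℝ g]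
    (hdim : Module.finrank ℝ (LieAlgebra.derivedSeries ℝ g 1 : Submodule ℝ g) = 1)
    (J : g →ₗ[ℝ] g) (hJ : J ∘ₗ J = -LinearMap.id)
    (hint : ∀ x y : g, ⁅x, y⁆ - ⁅J x, J y⁆ + J ⁅J x, y⁆ + J ⁅x, J y⁆ = 0) :
    ∀ x y : g, ⁅J x, J y⁆ = ⁅x, y⁆ :=
  stmt_12_general g hdim J hJ hint
end

section
/- Let (V,J) be a real vector space with a complex structure and ω a non-degenerate alternating J-invariant bilinear form on V. Then V has a basis x₁,y₁,...,xₙ,yₙ such that ω(xᵢ,yᵢ) = 1, ω(xᵢ,xⱼ) = ω(yᵢ,yⱼ) = 0, ω(xᵢ,yⱼ) = 0 for i ≠ j, and Jxᵢ = ±yᵢ for each i. -/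
/-! The form `(u, v) ↦ ω u (J v)` is symmetric, so on a `J`-invariant subspace `W` on which `ω`
is nondegenerate polarization yields `x ∈ W` with `ω x (J x) ≠ 0`. Rescaling `x` and taking
`y = ±J x` gives `ω x y = 1` and `J x = ±y`. The `ω`-orthogonal of `{x, y}` inside `W` is again
`J`-invariant, `ω`-nondegenerate and smaller, and together with `span {x, y}` it fills `W`; so
induction on the dimension produces the pairs. They are linearly independent because the family
`(-yᵢ, xᵢ)` is `ω`-dual to `(xᵢ, yᵢ)`. -/

open Module Submodule Set

theorem LinearIndependent.of_pairing {R M ι : Type*} [CommRing R] [AddCommGroup M] [Module R M]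
    [DecidableEq ι] (B : M →ₗ[R] M →ₗ[R] R) {f g : ι → M}
    (h : ∀ i j, B (g i) (f j) = if i = j then 1 else 0) : LinearIndependent R f := by
  refine LinearIndependent.of_comp (LinearMap.pi fun i => B (g i)) ?_
  have hpair : (LinearMap.pi fun i => B (g i)) ∘ f = fun j => Pi.single j 1 := by
    ext j i
    simp [h, Pi.single_apply]
  rw [hpair]
  exact Pi.linearIndependent_single_one ι R

section

variable {V : Type*} [AddCommGroup V] [Module ℝ V] {J : V →ₗ[ℝ] V} {ω : V →ₗ[ℝ] V →ₗ[ℝ] ℝ}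

theorem apply_J_left_eq_neg (hJ : ∀ v, J (J v) = -v) (hinv : ∀ x y, ω (J x) (J y) = ω x y)
    (u v : V) : ω (J u) v = -ω u (J v) := by
  rw [← hinv, hJ, map_neg, LinearMap.neg_apply]

theorem apply_J_comm (hJ : ∀ v, J (J v) = -v) (hω : ω.IsAlt)
    (hinv : ∀ x y, ω (J x) (J y) = ω x y) (u v : V) : ω v (J u) = ω u (J v) := by
  rw [← hω.neg, apply_J_left_eq_neg hJ hinv, neg_neg]

theorem exists_apply_J_ne_zero (hJ : ∀ v, J (J v) = -v) (hω : ω.IsAlt)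
    (hinv : ∀ x y, ω (J x) (J y) = ω x y) {W : Submodule ℝ V} (hJW : ∀ w ∈ W, J w ∈ W)
    (hWnd : ∀ x ∈ W, (∀ y ∈ W, ω x y = 0) → x = 0) (hW : W ≠ ⊥) :
    ∃ x ∈ W, ω x (J x) ≠ 0 := by
  by_contra! h
  have polar : ∀ u ∈ W, ∀ v ∈ W, ω u (J v) = 0 := by
    intro u hu v hv
    have := h (u + v) (add_mem hu hv)
    simp only [map_add, LinearMap.add_apply, h u hu, h v hv, apply_J_comm hJ hω hinv u v] at this
    linarith
  refine hW (eq_bot_iff.2 fun x hx => hWnd x hx fun y hy => ?_)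
  simpa [hJ] using polar x hx (J y) (hJW y hy)

theorem exists_apply_eq_one_of_apply_J_ne_zero {W : Submodule ℝ V} (hJW : ∀ w ∈ W, J w ∈ W)
    {x : V} (hxW : x ∈ W) (hx : ω x (J x) ≠ 0) :
    ∃ x' ∈ W, ∃ y' ∈ W, ω x' y' = 1 ∧ (J x' = y' ∨ J x' = -y') := by
  set c := ω x (J x)
  have hr : √|c| * √|c| = |c| := Real.mul_self_sqrt (abs_nonneg c)
  have hr0 : √|c| ≠ 0 := (Real.sqrt_pos.2 (abs_pos.2 hx)).ne'
  have hx' : (√|c|)⁻¹ • x ∈ W := smul_mem W _ hxW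
  rcases hx.lt_or_gt with hc | hc
  · refine ⟨_, hx', -J ((√|c|)⁻¹ • x), neg_mem (hJW _ hx'), ?_, .inr (neg_neg _).symm⟩
    simp only [map_smul, map_neg, LinearMap.smul_apply, smul_eq_mul]
    field_simp
    rw [sq, hr, abs_of_neg hc]
  · refine ⟨_, hx', J ((√|c|)⁻¹ • x), hJW _ hx', ?_, .inl rfl⟩
    simp only [map_smul, LinearMap.smul_apply, smul_eq_mul]
    field_simp
    rw [sq, hr, abs_of_pos hc]

variable (ω) in
def pairOrthogonal (W : Submodule ℝ V) (x y : V) : Submodule ℝ V :=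
  W ⊓ LinearMap.ker (ω x) ⊓ LinearMap.ker (ω y)

theorem mem_pairOrthogonal {W : Submodule ℝ V} {x y v : V} :
    v ∈ pairOrthogonal ω W x y ↔ v ∈ W ∧ ω x v = 0 ∧ ω y v = 0 := by
  simp [pairOrthogonal, and_assoc]

section pair

variable {W : Submodule ℝ V} {x y : V}

theorem add_smul_sub_smul_mem_pairOrthogonal (hω : ω.IsAlt) (hxW : x ∈ W) (hyW : y ∈ W)
    (hxy : ω x y = 1) {w : V} (hw : w ∈ W) :
    w + ω y w • x - ω x w • y ∈ pairOrthogonal ω W x y := by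
  have hyx : ω y x = -1 := by rw [← hω.neg, hxy]
  refine mem_pairOrthogonal.2
    ⟨sub_mem (add_mem hw (smul_mem W _ hxW)) (smul_mem W _ hyW), ?_, ?_⟩ <;>
    simp [hω.self_eq_zero, hxy, hyx]

theorem span_pair_sup_pairOrthogonal (hω : ω.IsAlt) (hxW : x ∈ W) (hyW : y ∈ W)
    (hxy : ω x y = 1) : span ℝ {x, y} ⊔ pairOrthogonal ω W x y = W := by
  refine le_antisymm (sup_le ?_ fun _ h => (mem_pairOrthogonal.1 h).1) fun w hw => ?_
  · exact span_le.2 (insert_subset hxW (singleton_subset_iff.2 hyW))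
  have hdecomp : w = ((-ω y w) • x + ω x w • y) + (w + ω y w • x - ω x w • y) := by module
  rw [hdecomp]
  exact add_mem_sup (mem_span_pair.2 ⟨_, _, rfl⟩)
    (add_smul_sub_smul_mem_pairOrthogonal hω hxW hyW hxy hw)

theorem pairOrthogonal_lt (hω : ω.IsAlt) (hxW : x ∈ W) (hxy : ω x y = 1) :
    pairOrthogonal ω W x y < W := by
  refine SetLike.lt_iff_le_and_exists.2
    ⟨fun _ h => (mem_pairOrthogonal.1 h).1, x, hxW, fun hx => ?_⟩
  have := (mem_pairOrthogonal.1 hx).2.2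
  rw [← hω.neg, hxy] at this
  norm_num at this

theorem J_mem_pairOrthogonal (hJ : ∀ v, J (J v) = -v) (hinv : ∀ x y, ω (J x) (J y) = ω x y)
    (hJW : ∀ w ∈ W, J w ∈ W) (hJx : J x = y ∨ J x = -y) {v : V}
    (hv : v ∈ pairOrthogonal ω W x y) : J v ∈ pairOrthogonal ω W x y := by
  obtain ⟨hvW, hxv, hyv⟩ := mem_pairOrthogonal.1 hv
  have hJy : J y = -x ∨ J y = x := by
    rcases hJx with h | h
    · exact .inl (by rw [← h, hJ])
    · exact .inr (by rw [← neg_neg y, ← h, map_neg, hJ, neg_neg])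
  refine mem_pairOrthogonal.2 ⟨hJW v hvW, ?_, ?_⟩
  · rw [← neg_eq_zero, ← apply_J_left_eq_neg hJ hinv]
    rcases hJx with h | h <;> simp [h, hyv]
  · rw [← neg_eq_zero, ← apply_J_left_eq_neg hJ hinv]
    rcases hJy with h | h <;> simp [h, hxv]

theorem pairOrthogonal_nondegenerate (hω : ω.IsAlt) (hxW : x ∈ W) (hyW : y ∈ W)
    (hxy : ω x y = 1) (hWnd : ∀ u ∈ W, (∀ v ∈ W, ω u v = 0) → u = 0) {u : V}
    (hu : u ∈ pairOrthogonal ω W x y) (hu' : ∀ v ∈ pairOrthogonal ω W x y, ω u v = 0) :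
    u = 0 := by
  obtain ⟨huW, hxu, hyu⟩ := mem_pairOrthogonal.1 hu
  refine hWnd u huW fun w hw => ?_
  have := hu' _ (add_smul_sub_smul_mem_pairOrthogonal hω hxW hyW hxy hw)
  simpa [hω.eq_iff.1 hxu, hω.eq_iff.1 hyu] using this

end pair

variable (J ω) in
structure IsAdaptedSymplecticPairs {n : ℕ} (e : Fin n → Fin 2 → V) : Prop where
  apply_eq_one : ∀ i, ω (e i 0) (e i 1) = 1
  apply_eq_zero_of_ne : ∀ i j, i ≠ j → ∀ a b, ω (e i a) (e j b) = 0
  J_eq : ∀ i, J (e i 0) = e i 1 ∨ J (e i 0) = -e i 1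

namespace IsAdaptedSymplecticPairs

variable {n : ℕ} {e : Fin n → Fin 2 → V}

theorem apply_self_eq_zero (he : IsAdaptedSymplecticPairs J ω e) (hω : ω.IsAlt)
    (i j : Fin n) (a : Fin 2) : ω (e i a) (e j a) = 0 := by
  rcases eq_or_ne i j with rfl | hij
  · exact hω.self_eq_zero _
  · exact he.apply_eq_zero_of_ne i j hij a a

theorem cons (he : IsAdaptedSymplecticPairs J ω e) (hω : ω.IsAlt) {x y : V}
    (hxy : ω x y = 1) (hJx : J x = y ∨ J x = -y) (horth : ∀ a i b, ω (![x, y] a) (e i b) = 0) :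
    IsAdaptedSymplecticPairs J ω (Fin.cons ![x, y] e : Fin (n + 1) → Fin 2 → V) where
  apply_eq_one i := Fin.cases (by simpa using hxy) (by simpa using he.apply_eq_one) i
  apply_eq_zero_of_ne i j hij a b := by
    induction i using Fin.cases <;> induction j using Fin.cases
    · exact absurd rfl hij
    · simpa using horth a _ b
    · simpa using hω.eq_iff.1 (horth b _ a)
    · simpa using he.apply_eq_zero_of_ne _ _ (fun h => hij (congrArg Fin.succ h)) a b
  J_eq i := Fin.cases (by simpa using hJx) (by simpa using he.J_eq) i

theorem linearIndependent (he : IsAdaptedSymplecticPairs J ω e) (hω : ω.IsAlt) :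
    LinearIndependent ℝ (Function.uncurry e) := by
  classical
  refine LinearIndependent.of_pairing ω (g := fun p => ![-e p.1 1, e p.1 0] p.2) ?_
  rintro ⟨i, a⟩ ⟨j, b⟩
  rcases eq_or_ne i j with rfl | hij
  · fin_cases a <;> fin_cases b <;>
      simp [he.apply_eq_one, hω.self_eq_zero, ← hω.neg (e i 0)]
  · fin_cases a <;> simp [he.apply_eq_zero_of_ne i j hij, hij]

end IsAdaptedSymplecticPairs

theorem range_uncurry_cons {α : Type*} {n : ℕ} (p : Fin 2 → α) (e : Fin n → Fin 2 → α) :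
    range (Function.uncurry (Fin.cons p e : Fin (n + 1) → Fin 2 → α)) =
      range p ∪ range (Function.uncurry e) := by
  ext v
  simp [Fin.exists_fin_succ]

theorem exists_isAdaptedSymplecticPairs_span_eq [FiniteDimensional ℝ V]
    (hJ : ∀ v, J (J v) = -v) (hω : ω.IsAlt) (hinv : ∀ x y, ω (J x) (J y) = ω x y)
    (W : Submodule ℝ V) (hJW : ∀ w ∈ W, J w ∈ W)
    (hWnd : ∀ x ∈ W, (∀ y ∈ W, ω x y = 0) → x = 0) :
    ∃ (n : ℕ) (e : Fin n → Fin 2 → V),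
      IsAdaptedSymplecticPairs J ω e ∧ span ℝ (range (Function.uncurry e)) = W := by
  induction h : finrank ℝ W using Nat.strong_induction_on generalizing W with
  | _ k ih =>
  rcases eq_or_ne W ⊥ with rfl | hW
  · exact ⟨0, finZeroElim, ⟨finZeroElim, finZeroElim, finZeroElim⟩, by simp⟩
  obtain ⟨x₀, hx₀W, hx₀⟩ := exists_apply_J_ne_zero hJ hω hinv hJW hWnd hW
  obtain ⟨x, hxW, y, hyW, hxy, hJx⟩ := exists_apply_eq_one_of_apply_J_ne_zero hJW hx₀W hx₀
  obtain ⟨n, e, he, hspan⟩ :=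
    ih _ (h ▸ finrank_lt_finrank_of_lt (pairOrthogonal_lt hω hxW hxy)) (pairOrthogonal ω W x y)
      (fun _ => J_mem_pairOrthogonal hJ hinv hJW hJx)
      (fun _ => pairOrthogonal_nondegenerate hω hxW hyW hxy hWnd) rfl
  have horth : ∀ a i b, ω (![x, y] a) (e i b) = 0 := by
    intro a i b
    have hmem : e i b ∈ pairOrthogonal ω W x y := hspan ▸ subset_span ⟨(i, b), rfl⟩
    have := mem_pairOrthogonal.1 hmem
    fin_cases a
    exacts [this.2.1, this.2.2]
  refine ⟨n + 1, Fin.cons ![x, y] e, he.cons hω hxy hJx horth, ?_⟩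
  rw [range_uncurry_cons, span_union, hspan, Matrix.range_cons_cons_empty,
    span_pair_sup_pairOrthogonal hω hxW hyW hxy]

end

/-- A real vector space with complex structure `J` and non-degenerate alternating
`J`-invariant form `ω` has a symplectic basis `x₁,y₁,…,xₙ,yₙ` with `Jxᵢ = ±yᵢ`.
Here `b (i,0)` plays the role of `xᵢ` and `b (i,1)` that of `yᵢ`. -/
theorem stmt_15 (V : Type*) [AddCommGroup V] [Module ℝ V] [FiniteDimensional ℝ V]
    (J : V →ₗ[ℝ] V) (hJ : J ∘ₗ J = -LinearMap.id)
    (ω : V →ₗ[ℝ] V →ₗ[ℝ] ℝ)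
    (halt : ∀ x : V, ω x x = 0)
    (hnd : ∀ x : V, (∀ y : V, ω x y = 0) → x = 0)
    (hinv : ∀ x y : V, ω (J x) (J y) = ω x y) :
    ∃ (n : ℕ) (b : Module.Basis (Fin n × Fin 2) ℝ V),
      (∀ i : Fin n, ω (b (i, 0)) (b (i, 1)) = 1) ∧
      (∀ i j : Fin n, ω (b (i, 0)) (b (j, 0)) = 0) ∧
      (∀ i j : Fin n, ω (b (i, 1)) (b (j, 1)) = 0) ∧
      (∀ i j : Fin n, i ≠ j → ω (b (i, 0)) (b (j, 1)) = 0) ∧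
      (∀ i : Fin n, J (b (i, 0)) = b (i, 1) ∨ J (b (i, 0)) = -b (i, 1)) := by
  have hJ' (v : V) : J (J v) = -v := by simpa using LinearMap.congr_fun hJ v
  obtain ⟨n, e, he, hspan⟩ := exists_isAdaptedSymplecticPairs_span_eq hJ' halt hinv ⊤
    (fun _ _ => trivial) (fun x _ hx => hnd x fun y => hx y trivial)
  refine ⟨n, Basis.mk (he.linearIndependent halt) hspan.ge, ?_⟩
  simp only [Basis.coe_mk, Function.uncurry_apply_pair]
  exact ⟨he.apply_eq_one, (he.apply_self_eq_zero halt · · 0),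
    (he.apply_self_eq_zero halt · · 1), fun i j hij => he.apply_eq_zero_of_ne i j hij 0 1, he.J_eq⟩
end

section
/- Let g be a 3-step nilpotent Lie algebra with dim_ℝ [g,g] = 2. Then for every integrable complex structure J on g, the commutator subalgebra [g,g] is not J-invariant; consequently J is abelian and each term of the ascending central series is J-invariant. -/
/-!
Write `𝔤¹ = [𝔤, 𝔤]` and `𝔤² = [𝔤, 𝔤¹]`; they have dimensions `2` and `1`, and `𝔤²` is central.
Since `J² = -1`, a nonzero `J`-invariant real subspace has dimension at least `2`, so the largest
`J`-invariant subspace `𝔤² ∩ J⁻¹𝔤²` of `𝔤²` vanishes. If `𝔤¹` were `J`-invariant, then for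
`z ∈ 𝔤²` the vanishing of the Nijenhuis tensor at `(z, y)` reads `J[Jz, y] = [Jz, Jy]`, which puts
`[Jz, y]` into `𝔤² ∩ J⁻¹𝔤² = 0`. Then `z` and `Jz`, which span `𝔤¹`, are central and `𝔤² = 0`.

So `𝔤¹ ∩ J⁻¹𝔤¹` is a proper subspace of the plane `𝔤¹`, hence zero. The Nijenhuis condition says
that `[x, y] - [Jx, Jy] = -J([Jx, y] + [x, Jy])` lies in `𝔤¹ ∩ J⁻¹𝔤¹`, i.e. `J` is abelian. For
abelian `J` one has `[y, Jx] = -[Jy, x]`, so `J` preserves each normalizer step of the ascending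
central series.
-/

open Module LieModule

lemma apply_apply_eq_neg {R M : Type*} [Semiring R] [AddCommGroup M] [Module R M]
    {J : M →ₗ[R] M} (hJ : J ∘ₗ J = -LinearMap.id) (v : M) : J (J v) = -v := by
  simpa using LinearMap.congr_fun hJ v

section ComplexStructure

variable {K V : Type*} [Field K] [LinearOrder K] [IsStrictOrderedRing K]
  [AddCommGroup V] [Module K V] {J : V →ₗ[K] V}

lemma linearIndependent_pair_apply (hJ : J ∘ₗ J = -LinearMap.id) {v : V} (hv : v ≠ 0) :
    LinearIndependent K ![v, J v] := by
  rw [LinearIndependent.pair_iff]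
  intro s t hst
  have hJst : s • J v - t • v = 0 := by
    simpa [apply_apply_eq_neg hJ, sub_eq_add_neg] using congrArg J hst
  have hsq : (s * s + t * t) • v = 0 := by
    rw [show (s * s + t * t) • v = s • (s • v + t • J v) - t • (s • J v - t • v) by module,
      hst, hJst, smul_zero, smul_zero, sub_zero]
  have hsq0 : s * s + t * t = 0 := (smul_eq_zero.mp hsq).resolve_right hv
  constructor <;> nlinarith [mul_self_nonneg s, mul_self_nonneg t]

lemma finrank_span_pair_apply (hJ : J ∘ₗ J = -LinearMap.id) {v : V} (hv : v ≠ 0) :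
    finrank K (Submodule.span K {v, J v}) = 2 := by
  rw [← Matrix.range_cons_cons_empty v (J v) ![], finrank_span_eq_card
    (linearIndependent_pair_apply hJ hv), Fintype.card_fin]

variable [FiniteDimensional K V]

lemma span_pair_apply_eq (hJ : J ∘ₗ J = -LinearMap.id) {S : Submodule K V}
    (hS : finrank K S = 2) {v : V} (hv : v ∈ S) (hJv : J v ∈ S) (hv0 : v ≠ 0) :
    Submodule.span K {v, J v} = S :=
  Submodule.eq_of_le_of_finrank_le (Submodule.span_le.mpr (Set.pair_subset hv hJv))
    (by rw [hS, finrank_span_pair_apply hJ hv0])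

lemma inf_comap_eq_bot_of_finrank_lt_two (hJ : J ∘ₗ J = -LinearMap.id) {S : Submodule K V}
    (hS : finrank K ↥(S ⊓ S.comap J) < 2) : S ⊓ S.comap J = ⊥ := by
  by_contra hne
  obtain ⟨v, hv, hv0⟩ := Submodule.exists_mem_ne_zero_of_ne_bot hne
  have hJv : J v ∈ S ⊓ S.comap J := by
    rw [Submodule.mem_inf, Submodule.mem_comap, apply_apply_eq_neg hJ, neg_mem_iff]
    exact (Submodule.mem_inf.mp hv).symm
  have hle := Submodule.finrank_mono (Submodule.span_le.mpr (Set.pair_subset hv hJv))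
  rw [finrank_span_pair_apply hJ hv0] at hle
  omega

lemma inf_comap_eq_bot_of_finrank_eq_two (hJ : J ∘ₗ J = -LinearMap.id) {S : Submodule K V}
    (hS : finrank K S = 2) (hnot : ¬ ∀ v ∈ S, J v ∈ S) : S ⊓ S.comap J = ⊥ := by
  refine inf_comap_eq_bot_of_finrank_lt_two hJ (hS ▸ Submodule.finrank_lt_finrank_of_lt ?_)
  refine lt_of_le_of_ne inf_le_left fun h => hnot fun v hv => ?_
  exact (Submodule.mem_inf.mp (h.ge hv)).2

end ComplexStructure

section LowerCentralSeries

variable {R L M : Type*} [CommRing R] [LieRing L] [LieAlgebra R L]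
  [AddCommGroup M] [Module R M] [LieRingModule L M]

lemma LieModule.lie_mem_lowerCentralSeries_succ {k : ℕ} (x : L) {m : M}
    (hm : m ∈ lowerCentralSeries R L M k) : ⁅x, m⁆ ∈ lowerCentralSeries R L M (k + 1) := by
  rw [lowerCentralSeries_succ]
  exact LieSubmodule.lie_mem_lie (LieSubmodule.mem_top x) hm

lemma LieModule.lowerCentralSeries_succ_eq_bot_iff [LieModule R L M] {k : ℕ} :
    lowerCentralSeries R L M (k + 1) = ⊥ ↔
      lowerCentralSeries R L M k ≤ maxTrivSubmodule R L M := by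
  rw [lowerCentralSeries_succ, LieSubmodule.lie_eq_bot_iff]
  exact ⟨fun h m hm x => h x (LieSubmodule.mem_top x) m hm, fun h x _ m hm => h hm x⟩

lemma LieModule.lowerCentralSeries_succ_lt [LieModule R L M] {k : ℕ}
    (h : lowerCentralSeries R L M (k + 2) ≠ lowerCentralSeries R L M (k + 1)) :
    lowerCentralSeries R L M (k + 1) < lowerCentralSeries R L M k := by
  refine lt_of_le_of_ne (antitone_lowerCentralSeries R L M k.le_succ) fun heq => h ?_
  rw [lowerCentralSeries_succ, heq, ← lowerCentralSeries_succ, heq]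

end LowerCentralSeries

section IntegrableComplexStructure

variable {R L : Type*} [CommRing R] [LieRing L] [LieAlgebra R L] {J : L →ₗ[R] L}

lemma apply_lie_apply_eq_of_mem_maxTrivSubmodule
    (hint : ∀ x y : L, ⁅x, y⁆ - ⁅J x, J y⁆ + J ⁅J x, y⁆ + J ⁅x, J y⁆ = 0)
    {z : L} (hz : z ∈ maxTrivSubmodule R L L) (y : L) : J ⁅J z, y⁆ = ⁅J z, J y⁆ := by
  have hzy : ∀ y : L, ⁅z, y⁆ = 0 := fun y => by rw [← lie_skew, hz y, neg_zero]
  have := hint z y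
  rwa [hzy, hzy, map_zero, add_zero, zero_sub, neg_add_eq_sub, sub_eq_zero] at this

lemma lie_eq_lie_apply_of_inf_comap_eq_bot (hJ : J ∘ₗ J = -LinearMap.id)
    (hint : ∀ x y : L, ⁅x, y⁆ - ⁅J x, J y⁆ + J ⁅J x, y⁆ + J ⁅x, J y⁆ = 0)
    (hbot : (lowerCentralSeries R L L 1 : Submodule R L) ⊓
      (lowerCentralSeries R L L 1 : Submodule R L).comap J = ⊥) (x y : L) :
    ⁅x, y⁆ = ⁅J x, J y⁆ := by
  have hmem : ∀ x y : L, ⁅x, y⁆ ∈ lowerCentralSeries R L L 1 := fun x y =>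
    lie_mem_lowerCentralSeries_succ x (LieSubmodule.mem_top y)
  have hN : ⁅x, y⁆ - ⁅J x, J y⁆ = J (-(⁅J x, y⁆ + ⁅x, J y⁆)) := by
    rw [map_neg, map_add, ← sub_eq_zero, ← hint x y]
    abel
  have hW : ⁅x, y⁆ - ⁅J x, J y⁆ ∈ (lowerCentralSeries R L L 1 : Submodule R L) ⊓
      (lowerCentralSeries R L L 1 : Submodule R L).comap J := by
    refine Submodule.mem_inf.mpr ⟨sub_mem (hmem x y) (hmem (J x) (J y)), ?_⟩
    rw [Submodule.mem_comap, hN, apply_apply_eq_neg hJ, neg_neg]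
    exact add_mem (hmem (J x) y) (hmem x (J y))
  rwa [hbot, Submodule.mem_bot, sub_eq_zero] at hW

lemma apply_mem_ucs (hJ : J ∘ₗ J = -LinearMap.id) (habel : ∀ x y : L, ⁅x, y⁆ = ⁅J x, J y⁆)
    (i : ℕ) {x : L} (hx : x ∈ (⊥ : LieSubmodule R L L).ucs i) :
    J x ∈ (⊥ : LieSubmodule R L L).ucs i := by
  induction i generalizing x with
  | zero =>
    rw [LieSubmodule.ucs_zero, LieSubmodule.mem_bot] at hx ⊢
    rw [hx, map_zero]
  | succ k _ =>
    rw [LieSubmodule.ucs_succ, LieSubmodule.mem_normalizer] at hx ⊢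
    intro y
    have hy : ⁅y, J x⁆ = -⁅J y, x⁆ := by
      rw [habel (J y) x, apply_apply_eq_neg hJ, neg_lie, neg_neg]
    rw [hy]
    exact neg_mem (hx (J y))

end IntegrableComplexStructure

theorem LieAlgebra.not_forall_apply_mem_lowerCentralSeries_one {K L : Type*} [Field K]
    [LinearOrder K] [IsStrictOrderedRing K] [LieRing L] [LieAlgebra K L] [FiniteDimensional K L]
    {J : L →ₗ[K] L} (hJ : J ∘ₗ J = -LinearMap.id)
    (hint : ∀ x y : L, ⁅x, y⁆ - ⁅J x, J y⁆ + J ⁅J x, y⁆ + J ⁅x, J y⁆ = 0)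
    (h3 : lowerCentralSeries K L L 3 = ⊥) (h2 : lowerCentralSeries K L L 2 ≠ ⊥)
    (hdim : finrank K (lowerCentralSeries K L L 1 : Submodule K L) = 2) :
    ¬ ∀ c ∈ lowerCentralSeries K L L 1, J c ∈ lowerCentralSeries K L L 1 := by
  intro hinv
  set C₁ := (lowerCentralSeries K L L 1 : Submodule K L)
  set C₂ := (lowerCentralSeries K L L 2 : Submodule K L)
  have hcent : lowerCentralSeries K L L 2 ≤ maxTrivSubmodule K L L :=
    lowerCentralSeries_succ_eq_bot_iff.mp h3
  have hlt : C₂ < C₁ := lowerCentralSeries_succ_lt (by rw [h3]; exact h2.symm)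
  have hdim₂ : finrank K C₂ < 2 := hdim ▸ Submodule.finrank_lt_finrank_of_lt hlt
  have hbot : C₂ ⊓ C₂.comap J = ⊥ :=
    inf_comap_eq_bot_of_finrank_lt_two hJ ((Submodule.finrank_mono inf_le_left).trans_lt hdim₂)
  obtain ⟨z, hz, hz0⟩ := Submodule.exists_mem_ne_zero_of_ne_bot
    ((LieSubmodule.toSubmodule_eq_bot _).not.mpr h2)
  have hJz₁ : J z ∈ C₁ := hinv z (hlt.le hz)
  have hJz : J z ∈ maxTrivSubmodule K L L := by
    intro y
    have hmem : ⁅J z, y⁆ ∈ C₂ ⊓ C₂.comap J := by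
      refine Submodule.mem_inf.mpr ⟨?_, ?_⟩
      · rw [← lie_skew]
        exact neg_mem (lie_mem_lowerCentralSeries_succ y hJz₁)
      · rw [Submodule.mem_comap, apply_lie_apply_eq_of_mem_maxTrivSubmodule hint (hcent hz),
          ← lie_skew]
        exact neg_mem (lie_mem_lowerCentralSeries_succ (J y) hJz₁)
    rw [hbot, Submodule.mem_bot] at hmem
    rw [← lie_skew, hmem, neg_zero]
  have hC₁ : C₁ ≤ (maxTrivSubmodule K L L : Submodule K L) := by
    rw [← span_pair_apply_eq hJ hdim (hlt.le hz) hJz₁ hz0, Submodule.span_le]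
    exact Set.pair_subset (hcent hz) hJz
  exact h2 (lowerCentralSeries_succ_eq_bot_iff.mpr hC₁)

/-- For a 3-step nilpotent Lie algebra with 2-dimensional commutator subalgebra and any
integrable complex structure `J`: the commutator subalgebra is not `J`-invariant, `J` is
abelian, and every term of the ascending central series is `J`-invariant. -/
theorem stmt_18 (g : Type*) [LieRing g] [LieAlgebra ℝ g] [Module.Finite ℝ g]
    (h3 : LieModule.lowerCentralSeries ℝ g g 3 = ⊥)
    (h3' : LieModule.lowerCentralSeries ℝ g g 2 ≠ ⊥)
    (hdim : Module.finrank ℝ (LieModule.lowerCentralSeries ℝ g g 1 : Submodule ℝ g) = 2)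
    (J : g →ₗ[ℝ] g) (hJ : J ∘ₗ J = -LinearMap.id)
    (hint : ∀ x y : g, ⁅x, y⁆ - ⁅J x, J y⁆ + J ⁅J x, y⁆ + J ⁅x, J y⁆ = 0) :
    ¬ (∀ c ∈ LieModule.lowerCentralSeries ℝ g g 1, J c ∈ LieModule.lowerCentralSeries ℝ g g 1) ∧
    (∀ x y : g, ⁅x, y⁆ = ⁅J x, J y⁆) ∧
    ∀ i : ℕ, ∀ x ∈ (⊥ : LieSubmodule ℝ g g).ucs i, J x ∈ (⊥ : LieSubmodule ℝ g g).ucs i := by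
  have hnot := LieAlgebra.not_forall_apply_mem_lowerCentralSeries_one hJ hint h3 h3' hdim
  have habel := lie_eq_lie_apply_of_inf_comap_eq_bot hJ hint
    (inf_comap_eq_bot_of_finrank_eq_two hJ hdim hnot)
  exact ⟨hnot, habel, fun i _ => apply_mem_ucs hJ habel i⟩
end

section
/- Let g be the real Lie algebra with basis e₁,...,e₆ and only nonzero brackets [e₁,e₂] = -e₅, [e₃,e₄] = -e₆ (the algebra h₂ = (0,0,0,0,12,34)). Then g is 2-step nilpotent, its centre equals its commutator subalgebra span{e₅,e₆}, and for every integrable complex structure J on g the subspace span{e₅,e₆} is J-invariant. -/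
/-!
In coordinates, `⁅x, y⁆ = (x₁y₀ - x₀y₁) e₄ + (x₃y₂ - x₂y₃) e₅`, so every bracket lies in
`span {e 4, e 5}`, which is exactly the centre. For central `z` the Nijenhuis condition reduces to
`J ⁅x, J z⁆ = ⁅J x, J z⁆`. If some `u = ⁅x, J z⁆` is nonzero, then `u` and `J u` both lie in the
two-dimensional centre; since `J² = -1` has no real eigenvector they are independent, hence span
the centre, which is therefore `J`-invariant. Otherwise `J z` is central for every central `z`.
-/

open Module LieAlgebra

section ComplexStructure

variable {K V : Type*} [Field K] [LinearOrder K] [IsStrictOrderedRing K]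
  [AddCommGroup V] [Module K V] {J : V →ₗ[K] V}

theorem LinearMap.linearIndependent_pair_apply_of_comp_self_eq_neg
    (hJ : J ∘ₗ J = -LinearMap.id) {u : V} (hu : u ≠ 0) : LinearIndependent K ![u, J u] := by
  have hJJ : J (J u) = -u := by simpa using LinearMap.congr_fun hJ u
  refine LinearIndependent.pair_iff.mpr fun s t hst => ?_
  have hJst : s • J u - t • u = 0 := by
    simpa [hJJ, sub_eq_add_neg, add_comm] using congrArg J hst
  have hsq : (s * s + t * t) • u = 0 := by
    calc (s * s + t * t) • u = s • (s • u + t • J u) - t • (s • J u - t • u) := by module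
      _ = 0 := by rw [hst, hJst, smul_zero, smul_zero, sub_zero]
  have hsum : s * s + t * t = 0 := (smul_eq_zero.mp hsq).resolve_right hu
  constructor <;> nlinarith [mul_self_nonneg s, mul_self_nonneg t]

theorem Submodule.apply_mem_of_finrank_eq_two (hJ : J ∘ₗ J = -LinearMap.id)
    {Z : Submodule K V} (hZ : finrank K Z = 2) {u : V} (hu0 : u ≠ 0) (hu : u ∈ Z)
    (hJu : J u ∈ Z) {z : V} (hz : z ∈ Z) : J z ∈ Z := by
  have : FiniteDimensional K Z := Module.finite_of_finrank_eq_succ hZ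
  have hspan : span K {u, J u} = Z := by
    refine eq_of_le_of_finrank_eq (span_le.mpr (Set.pair_subset hu hJu)) ?_
    rw [hZ, ← Matrix.range_cons_cons_empty u (J u) ![],
      finrank_span_eq_card (J.linearIndependent_pair_apply_of_comp_self_eq_neg hJ hu0),
      Fintype.card_fin]
  have hJJ : J (J u) = -u := by simpa using LinearMap.congr_fun hJ u
  obtain ⟨a, b, rfl⟩ := mem_span_pair.mp (hspan ▸ hz)
  rw [map_add, map_smul, map_smul, hJJ]
  exact add_mem (smul_mem _ _ hJu) (smul_mem _ _ (neg_mem hu))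

end ComplexStructure

section Nijenhuis

variable {R L : Type*} [CommRing R] [LieRing L] [LieAlgebra R L] {J : L →ₗ[R] L}

theorem apply_lie_apply_of_mem_center
    (hN : ∀ x y : L, ⁅x, y⁆ - ⁅J x, J y⁆ + J ⁅J x, y⁆ + J ⁅x, J y⁆ = 0)
    {z : L} (hz : z ∈ center R L) (x : L) : J ⁅x, J z⁆ = ⁅J x, J z⁆ := by
  have hcentral : ∀ y, ⁅y, z⁆ = 0 := (LieModule.mem_maxTrivSubmodule R L L z).mp hz
  have h := hN x z
  rw [hcentral x, hcentral (J x), map_zero] at h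
  rw [← sub_eq_zero, ← h]
  abel

end Nijenhuis

theorem LieAlgebra.center_apply_mem_of_finrank_eq_two {K L : Type*} [Field K] [LinearOrder K]
    [IsStrictOrderedRing K] [LieRing L] [LieAlgebra K L]
    (hder : ∀ x y : L, ⁅x, y⁆ ∈ center K L)
    (hdim : finrank K (center K L : Submodule K L) = 2)
    {J : L →ₗ[K] L} (hJ : J ∘ₗ J = -LinearMap.id)
    (hN : ∀ x y : L, ⁅x, y⁆ - ⁅J x, J y⁆ + J ⁅J x, y⁆ + J ⁅x, J y⁆ = 0)
    {z : L} (hz : z ∈ center K L) : J z ∈ center K L := by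
  by_cases h : ∃ x : L, ∃ w ∈ center K L, ⁅x, J w⁆ ≠ 0
  · obtain ⟨x, w, hw, hxw⟩ := h
    have hJu : J ⁅x, J w⁆ ∈ center K L := apply_lie_apply_of_mem_center hN hw x ▸ hder _ _
    exact Submodule.apply_mem_of_finrank_eq_two hJ hdim hxw (hder x (J w)) hJu hz
  · push Not at h
    exact (LieModule.mem_maxTrivSubmodule K L L (J z)).mpr fun x => h x z hz

theorem Module.Basis.linearIndependent_pair {ι R M : Type*} [Semiring R] [AddCommMonoid M]
    [Module R M] (b : Basis ι R M) {i j : ι} (hij : i ≠ j) : LinearIndependent R ![b i, b j] := by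
  convert b.linearIndependent.comp ![i, j] ?_
  · ext k; fin_cases k <;> rfl
  · intro k l; fin_cases k <;> fin_cases l <;> simp [hij, hij.symm]

section H2

variable {g : Type*} [LieRing g] [LieAlgebra ℝ g] {e : Basis (Fin 6) ℝ g}

theorem lie_eq_repr_of_h2 (h01 : ⁅e 0, e 1⁆ = -e 4) (h23 : ⁅e 2, e 3⁆ = -e 5)
    (hother : ∀ i j : Fin 6,
      ¬ ((i = 0 ∧ j = 1) ∨ (i = 1 ∧ j = 0) ∨ (i = 2 ∧ j = 3) ∨ (i = 3 ∧ j = 2)) →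
      ⁅e i, e j⁆ = 0) (x y : g) :
    ⁅x, y⁆ = (e.repr x 1 * e.repr y 0 - e.repr x 0 * e.repr y 1) • e 4 +
      (e.repr x 3 * e.repr y 2 - e.repr x 2 * e.repr y 3) • e 5 := by
  have h10 : ⁅e 1, e 0⁆ = e 4 := by rw [← lie_skew, h01, neg_neg]
  have h32 : ⁅e 3, e 2⁆ = e 5 := by rw [← lie_skew, h23, neg_neg]
  nth_rewrite 1 [← e.sum_repr x, ← e.sum_repr y]
  simp (disch := decide) only [Fin.sum_univ_six, add_lie, lie_add, smul_lie, lie_smul, h01, h10,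
    h23, h32, hother]
  module

theorem lie_mem_span_of_lie_eq (hlie : ∀ x y : g, ⁅x, y⁆ =
      (e.repr x 1 * e.repr y 0 - e.repr x 0 * e.repr y 1) • e 4 +
      (e.repr x 3 * e.repr y 2 - e.repr x 2 * e.repr y 3) • e 5) (x y : g) :
    ⁅x, y⁆ ∈ Submodule.span ℝ {e 4, e 5} :=
  Submodule.mem_span_pair.mpr ⟨_, _, (hlie x y).symm⟩

theorem center_eq_span_of_lie_eq (hlie : ∀ x y : g, ⁅x, y⁆ =
      (e.repr x 1 * e.repr y 0 - e.repr x 0 * e.repr y 1) • e 4 +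
      (e.repr x 3 * e.repr y 2 - e.repr x 2 * e.repr y 3) • e 5) :
    (center ℝ g : Submodule ℝ g) = Submodule.span ℝ {e 4, e 5} := by
  apply le_antisymm
  · intro m hm
    have hcoord (x : g) := LinearIndependent.pair_iff.mp (e.linearIndependent_pair (by decide))
      _ _ ((hlie x m).symm.trans ((LieModule.mem_maxTrivSubmodule ℝ g g m).mp hm x))
    obtain ⟨c1, -⟩ := hcoord (e 0)
    obtain ⟨c0, -⟩ := hcoord (e 1)
    obtain ⟨-, c3⟩ := hcoord (e 2)
    obtain ⟨-, c2⟩ := hcoord (e 3)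
    rw [← Set.image_pair, e.mem_span_image]
    intro i hi
    rw [SetLike.mem_coe, Finsupp.mem_support_iff] at hi
    fin_cases i <;> simp_all [Basis.repr_self]
  · rw [Submodule.span_le]
    rintro v (rfl | rfl) <;>
      exact (LieModule.mem_maxTrivSubmodule ℝ g g _).mpr fun x => by simp [hlie, Basis.repr_self]

theorem derivedSeries_one_eq_span_of_lie_eq (hlie : ∀ x y : g, ⁅x, y⁆ =
      (e.repr x 1 * e.repr y 0 - e.repr x 0 * e.repr y 1) • e 4 +
      (e.repr x 3 * e.repr y 2 - e.repr x 2 * e.repr y 3) • e 5) :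
    (derivedSeries ℝ g 1 : Submodule ℝ g) = Submodule.span ℝ {e 4, e 5} := by
  rw [derivedSeries_def, derivedSeriesOfIdeal_succ, derivedSeriesOfIdeal_zero,
    LieIdeal.toLieSubalgebra_toSubmodule, LieSubmodule.lieIdeal_oper_eq_linear_span']
  apply le_antisymm
  · rw [Submodule.span_le]
    rintro _ ⟨x, -, y, -, rfl⟩
    exact lie_mem_span_of_lie_eq hlie x y
  · rw [Submodule.span_le]
    rintro v (rfl | rfl)
    · exact Submodule.subset_span ⟨e 1, trivial, e 0, trivial, by simp [hlie, Basis.repr_self]⟩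
    · exact Submodule.subset_span ⟨e 3, trivial, e 2, trivial, by simp [hlie, Basis.repr_self]⟩

end H2

/-- The 6-dimensional nilpotent Lie algebra `h₂ = (0,0,0,0,12,34)` (basis `e 0, …, e 5`,
nonzero brackets `[e 0, e 1] = -e 4`, `[e 2, e 3] = -e 5`) is 2-step nilpotent, its centre
equals its commutator subalgebra `span {e 4, e 5}`, and this subspace is invariant under
every integrable complex structure. -/
theorem stmt_19 (g : Type*) [LieRing g] [LieAlgebra ℝ g]
    (e : Module.Basis (Fin 6) ℝ g)
    (h01 : ⁅e 0, e 1⁆ = -e 4) (h23 : ⁅e 2, e 3⁆ = -e 5)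
    (hother : ∀ i j : Fin 6,
      ¬ ((i = 0 ∧ j = 1) ∨ (i = 1 ∧ j = 0) ∨ (i = 2 ∧ j = 3) ∨ (i = 3 ∧ j = 2)) →
      ⁅e i, e j⁆ = 0) :
    (∀ x y z : g, ⁅⁅x, y⁆, z⁆ = 0) ∧
    (LieAlgebra.center ℝ g : Submodule ℝ g) = Submodule.span ℝ {e 4, e 5} ∧
    (LieAlgebra.derivedSeries ℝ g 1 : Submodule ℝ g) = Submodule.span ℝ {e 4, e 5} ∧
    ∀ J : g →ₗ[ℝ] g, J ∘ₗ J = -LinearMap.id →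
      (∀ x y : g, ⁅x, y⁆ - ⁅J x, J y⁆ + J ⁅J x, y⁆ + J ⁅x, J y⁆ = 0) →
      ∀ v ∈ Submodule.span ℝ ({e 4, e 5} : Set g), J v ∈ Submodule.span ℝ ({e 4, e 5} : Set g) := by
  have hlie := lie_eq_repr_of_h2 h01 h23 hother
  have hcenter := center_eq_span_of_lie_eq hlie
  have hder (x y : g) : ⁅x, y⁆ ∈ (center ℝ g : Submodule ℝ g) :=
    hcenter ▸ lie_mem_span_of_lie_eq hlie x y
  refine ⟨fun x y z => ?_, hcenter, derivedSeries_one_eq_span_of_lie_eq hlie, ?_⟩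
  · rw [← lie_skew, (LieModule.mem_maxTrivSubmodule ℝ g g _).mp (hder x y) z, neg_zero]
  · intro J hJ hN v hv
    have hdim : finrank ℝ (center ℝ g : Submodule ℝ g) = 2 := by
      rw [hcenter, ← Matrix.range_cons_cons_empty (e 4) (e 5) ![],
        finrank_span_eq_card (e.linearIndependent_pair (by decide)), Fintype.card_fin]
    rw [← hcenter] at hv ⊢
    exact center_apply_mem_of_finrank_eq_two hder hdim hJ hN hv
end
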